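/- arXiv:2305.09309 — 5 statements merged into one kernel-verified Lean document; each statement's English description precedes it below -/
import Mathlib

section
/- If for all measurable sets B the map θ ↦ P_θ(B) is Fréchet differentiable on a subset Θ of a separable real Hilbert space Ξ, then for every fixed φ ∈ Ξ, the set function B ↦ D_θ P_θ(B)[φ] is countably additive and absolutely continuous with respect to P_θ. -/
open MeasureTheory

local notation "⟪" x ", " y "⟫" => @inner ℝ _ _ x y

open Set Filter Topology
open scoped symmDiff NNReal ENNReal

/-!
Near `θ` the measures `P t` are finite, so `B ↦ D θ B φ` is finitely additive; it is the setwise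
limit of the finitely additive set functions `B ↦ c * (P (θ + c⁻¹ • φ) B - P θ B)` as `c → ∞`.
Along a sequence `c k → ∞` all of these are continuous on the complete metric space of measurable
sets modulo one finite measure `μ` dominating the countably many `P (θ + (c k)⁻¹ • φ)`. The Baire
category argument of Vitali–Hahn–Saks then makes the limit uniformly absolutely continuous with
respect to `μ`, which upgrades finite to countable additivity. Absolute continuity with respect to
`P θ` is simpler: if `P θ B = 0`, then `t ↦ P t B` has a minimum at `θ`, so its derivative vanishes.
-/

lemma exists_isOpen_forall_dist_le_of_cauchySeq {X E : Type*} [TopologicalSpace X] [BaireSpace X]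
    [Nonempty X] [PseudoMetricSpace E] (f : ℕ → X → E) (hf : ∀ k, Continuous (f k))
    (hc : ∀ x, CauchySeq fun k ↦ f k x) {ε : ℝ} (hε : 0 < ε) :
    ∃ N, ∃ U : Set X, IsOpen U ∧ U.Nonempty ∧ ∀ x ∈ U, ∀ j ≥ N, dist (f j x) (f N x) ≤ ε := by
  set F : ℕ → Set X := fun N ↦ {x | ∀ j ≥ N, dist (f j x) (f N x) ≤ ε}
  have hclosed : ∀ N, IsClosed (F N) := fun N ↦ by
    simp only [F, ofPred_forall]
    exact isClosed_iInter fun j ↦ isClosed_iInter fun _ ↦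
      isClosed_le ((hf j).dist (hf N)) continuous_const
  have hcover : ⋃ N, F N = univ := eq_univ_of_forall fun x ↦ by
    obtain ⟨N, hN⟩ := Metric.cauchySeq_iff'.1 (hc x) ε hε
    exact mem_iUnion.2 ⟨N, fun j hj ↦ (hN j hj).le⟩
  obtain ⟨N, hN⟩ := nonempty_interior_of_iUnion_of_closed hclosed hcover
  exact ⟨N, interior (F N), isOpen_interior, hN, fun x hx ↦ interior_subset hx⟩

lemma Set.symmDiff_iInter_iUnion_add_subset {Ω : Type*} (u : ℕ → Set Ω) (N : ℕ) :
    u N ∆ (⋂ M, ⋃ j, u (M + j)) ⊆ ⋃ j, u (N + j) ∆ u (N + j + 1) := by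
  intro x hx
  by_contra hx'
  simp only [mem_iUnion, not_exists, mem_symmDiff, not_or, not_and, not_not] at hx'
  have hconst : ∀ j, x ∈ u (N + j) ↔ x ∈ u N := by
    intro j
    induction j with
    | zero => rfl
    | succ j ih => rw [← ih, ← Nat.add_assoc]; exact ⟨(hx' j).2, (hx' j).1⟩
  have hlim : x ∈ ⋂ M, ⋃ j, u (M + j) ↔ x ∈ u N := by
    simp only [mem_iInter, mem_iUnion]
    refine ⟨fun h ↦ ?_, fun h M ↦ ⟨N, ?_⟩⟩
    · obtain ⟨j, hj⟩ := h N
      exact (hconst j).1 hj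
    · rwa [Nat.add_comm, hconst]
  rcases mem_symmDiff.1 hx with ⟨h, h'⟩ | ⟨h, h'⟩
  · exact h' (hlim.2 h)
  · exact h' (hlim.1 h)

namespace MeasureTheory

variable {Ω : Type*} [MeasurableSpace Ω] {μ : Measure Ω}

namespace MeasuredSets

instance : CompleteSpace (MeasuredSets μ) := by
  refine EMetric.complete_of_convergent_controlled_sequences (fun n ↦ 2⁻¹ ^ n)
    (fun n ↦ ENNReal.pow_pos (by norm_num) n) fun u hu ↦ ?_
  let L : Set Ω := ⋂ M, ⋃ j, (u (M + j) : Set Ω)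
  have hL : MeasurableSet L := .iInter fun M ↦ .iUnion fun j ↦ (u (M + j)).2
  refine ⟨⟨L, hL⟩, ?_⟩
  have hdist : ∀ N, edist (u N) ⟨L, hL⟩ ≤ 2⁻¹ ^ N * 2 := fun N ↦ calc
    edist (u N) ⟨L, hL⟩ ≤ ∑' j, μ ((u (N + j) : Set Ω) ∆ u (N + j + 1)) :=
      (measure_mono (Set.symmDiff_iInter_iUnion_add_subset (fun n ↦ (u n : Set Ω)) N)).trans
        (measure_iUnion_le _)
    _ ≤ ∑' j, 2⁻¹ ^ (N + j) :=
      ENNReal.tsum_le_tsum fun j ↦ (hu _ _ _ le_rfl (Nat.le_succ _)).le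
    _ = 2⁻¹ ^ N * 2 := by
      simp_rw [pow_add, ENNReal.tsum_mul_left, ENNReal.tsum_geometric, ENNReal.one_sub_inv_two,
        inv_inv]
  refine tendsto_iff_edist_tendsto_0.2 (tendsto_of_tendsto_of_tendsto_of_le_of_le
    tendsto_const_nhds ?_ (fun _ ↦ bot_le) hdist)
  simpa using ENNReal.Tendsto.mul_const
    (ENNReal.tendsto_pow_atTop_nhds_zero_of_lt_one (by norm_num)) (Or.inr ENNReal.ofNat_ne_top)

lemma dist_lt_of_symmDiff_subset [IsFiniteMeasure μ] {s t : MeasuredSets μ} {u : Set Ω}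
    (h : (s : Set Ω) ∆ t ⊆ u) {r : ℝ} (hu : μ.real u < r) : dist s t < r :=
  (measureReal_mono h).trans_lt hu

lemma continuous_measureReal_of_le_smul {ν : Measure Ω} [IsFiniteMeasure ν] {c : ℝ≥0}
    (h : ν ≤ c • μ) : Continuous fun s : MeasuredSets μ ↦ ν.real s := by
  let f : MeasuredSets μ → MeasuredSets ν := fun s ↦ ⟨s, s.2⟩
  have hlip : LipschitzWith c f := fun s t ↦ h _
  exact (lipschitzWith_measureReal (μ := ν)).continuous.comp hlip.continuous

end MeasuredSets

lemma exists_isFiniteMeasure_forall_le_smul {ι : Type*} [Countable ι] (ν : ι → Measure Ω)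
    [∀ i, IsFiniteMeasure (ν i)] :
    ∃ μ : Measure Ω, IsFiniteMeasure μ ∧ ∀ i, ∃ c : ℝ≥0, ν i ≤ c • μ := by
  obtain ⟨w, hw, hsum⟩ := ENNReal.exists_pos_sum_of_countable one_ne_zero ι
  set a : ι → ℝ≥0 := fun i ↦ w i / ((ν i univ).toNNReal + 1)
  have ha : ∀ i, a i ≠ 0 := fun i ↦ (div_pos (hw i) (by positivity)).ne'
  refine ⟨Measure.sum fun i ↦ a i • ν i, ⟨?_⟩, fun i ↦ ⟨(a i)⁻¹, ?_⟩⟩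
  · have hterm : ∀ i, (a i • ν i) univ ≤ w i := fun i ↦ calc
      (a i • ν i) univ ≤ a i * (((ν i univ).toNNReal + 1 : ℝ≥0) : ℝ≥0∞) := by
        rw [Measure.smul_apply, ENNReal.smul_def, smul_eq_mul, ENNReal.coe_add,
          ENNReal.coe_toNNReal (measure_ne_top _ _)]
        gcongr
        exact le_self_add
      _ = w i := by rw [← ENNReal.coe_mul, div_mul_cancel₀ _ (by positivity)]
    rw [Measure.sum_apply _ MeasurableSet.univ]
    exact (ENNReal.tsum_le_tsum hterm).trans_lt (hsum.trans ENNReal.one_lt_top)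
  · calc ν i = (a i)⁻¹ • a i • ν i := by rw [smul_smul, inv_mul_cancel₀ (ha i), one_smul]
      _ ≤ (a i)⁻¹ • Measure.sum fun i ↦ a i • ν i := by
        gcongr
        exact Measure.le_sum (fun i ↦ a i • ν i) i

/-- A form of the Vitali–Hahn–Saks theorem. -/
theorem exists_abs_le_of_measureReal_lt_of_tendsto [IsFiniteMeasure μ] (m : ℕ → Set Ω → ℝ)
    (hadd : ∀ k s t, MeasurableSet s → MeasurableSet t → Disjoint s t →
      m k (s ∪ t) = m k s + m k t)
    (hcont : ∀ k, Continuous fun s : MeasuredSets μ ↦ m k s) {Λ : Set Ω → ℝ}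
    (hΛ : ∀ s, MeasurableSet s → Tendsto (fun k ↦ m k s) atTop (𝓝 (Λ s))) {ε : ℝ} (hε : 0 < ε) :
    ∃ δ > 0, ∀ s, MeasurableSet s → μ.real s < δ → |Λ s| ≤ ε := by
  have : Nonempty (MeasuredSets μ) := ⟨⟨∅, .empty⟩⟩
  obtain ⟨N, U, hU, ⟨x, hx⟩, hUN⟩ := exists_isOpen_forall_dist_le_of_cauchySeq
    (fun k (s : MeasuredSets μ) ↦ m k s) hcont (fun s ↦ (hΛ s s.2).cauchySeq) (ε := ε / 3)
    (by positivity)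
  obtain ⟨r, hr, hball⟩ := Metric.isOpen_iff.1 hU x hx
  have hempty : m N ∅ = 0 := by simpa using hadd N ∅ ∅ .empty .empty (disjoint_empty _)
  obtain ⟨δ, hδ, hsmall⟩ := Metric.continuousAt_iff.1
    ((hcont N).continuousAt (x := ⟨∅, .empty⟩)) (ε / 3) (by positivity)
  refine ⟨min r δ, lt_min hr hδ, fun s hs hμs ↦ ?_⟩
  -- `s` is the difference of two sets close to `x`, on which the `m k` are uniformly Cauchy.
  let A : MeasuredSets μ := ⟨x ∪ s, x.2.union hs⟩
  let B : MeasuredSets μ := ⟨x \ s, x.2.diff hs⟩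
  have hA : A ∈ U := hball <| MeasuredSets.dist_lt_of_symmDiff_subset
    (show ((x : Set Ω) ∪ s) ∆ x ⊆ s by intro y; simp only [mem_symmDiff, mem_union]; tauto)
    (hμs.trans_le (min_le_left _ _))
  have hB : B ∈ U := hball <| MeasuredSets.dist_lt_of_symmDiff_subset
    (show ((x : Set Ω) \ s) ∆ x ⊆ s by intro y; simp only [mem_symmDiff, Set.mem_sdiff]; tauto)
    (hμs.trans_le (min_le_left _ _))
  have hsplit : ∀ k, m k s = m k A - m k B := fun k ↦ by
    have := hadd k (x \ s) s (x.2.diff hs) hs disjoint_sdiff_left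
    rw [sdiff_union_self] at this
    exact eq_sub_of_add_eq' this.symm
  have hNs : |m N s| < ε / 3 := by
    let S : MeasuredSets μ := ⟨s, hs⟩
    have hd : dist S ⟨∅, .empty⟩ < δ := by
      change μ.real (s ∆ ⊥) < δ
      simpa only [symmDiff_bot] using hμs.trans_le (min_le_right _ _)
    have := hsmall hd
    change dist (m N s) (m N ∅) < ε / 3 at this
    rwa [hempty, Real.dist_eq, sub_zero] at this
  have hbound : ∀ j ≥ N, |m j s| ≤ ε := fun j hj ↦ by
    have hAj := hUN A hA j hj
    have hBj := hUN B hB j hj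
    rw [Real.dist_eq, abs_le] at hAj hBj
    rw [hsplit N, abs_lt] at hNs
    rw [hsplit j, abs_le]
    constructor <;> linarith
  exact le_of_tendsto (hΛ s hs).abs (eventually_atTop.2 ⟨N, hbound⟩)

theorem hasSum_of_additive_of_abs_le [IsFiniteMeasure μ] {Λ : Set Ω → ℝ}
    (hadd : ∀ s t, MeasurableSet s → MeasurableSet t → Disjoint s t → Λ (s ∪ t) = Λ s + Λ t)
    (hΛ : ∀ ε > 0, ∃ δ > 0, ∀ s, MeasurableSet s → μ.real s < δ → |Λ s| ≤ ε)
    {s : ℕ → Set Ω} (hs : ∀ n, MeasurableSet (s n))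
    (hdisj : Pairwise (Function.onFun Disjoint s)) :
    HasSum (fun n ↦ Λ (s n)) (Λ (⋃ n, s n)) := by
  classical
  have hfin : ∀ F : Finset ℕ, Λ (⋃ n ∈ F, s n) = ∑ n ∈ F, Λ (s n) := by
    intro F
    induction F using Finset.induction_on with
    | empty => simpa using hadd ∅ ∅ .empty .empty (disjoint_empty _)
    | insert a F ha ih =>
      rw [Finset.set_biUnion_insert, hadd _ _ (hs a) (F.measurableSet_biUnion fun n _ ↦ hs n),
        Finset.sum_insert ha, ih]
      exact disjoint_iUnion₂_right.2 fun n hn ↦ hdisj (ne_of_mem_of_not_mem hn ha).symm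
  let R : Finset ℕ → Set Ω := fun F ↦ ⋃ (n) (_ : n ∉ F), s n
  have hR : ∀ F, MeasurableSet (R F) := fun F ↦ .iUnion fun n ↦ .iUnion fun _ ↦ hs n
  have hsplit : ∀ F, Λ (⋃ n, s n) = ∑ n ∈ F, Λ (s n) + Λ (R F) := fun F ↦ by
    rw [← hfin, ← hadd _ _ (F.measurableSet_biUnion fun n _ ↦ hs n) (hR F)]
    · congr 1
      ext x
      simp only [mem_iUnion, mem_union, R]
      grind
    · exact disjoint_iUnion₂_left.2 fun n hn ↦ disjoint_iUnion₂_right.2 fun k hk ↦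
        hdisj (ne_of_mem_of_not_mem hn hk)
  have hμR : Tendsto (fun F ↦ μ.real (R F)) atTop (𝓝 0) := by
    have h := ENNReal.tendsto_tsum_compl_atTop_zero (f := fun n ↦ μ (s n))
      (by rw [← measure_iUnion hdisj hs]; exact measure_ne_top _ _)
    refine (ENNReal.tendsto_toReal ENNReal.zero_ne_top).comp
      (tendsto_of_tendsto_of_tendsto_of_le_of_le tendsto_const_nhds h (fun _ ↦ bot_le) fun F ↦ ?_)
    exact measure_biUnion_le μ (to_countable {n | n ∉ F}) s
  have hΛR : Tendsto (fun F ↦ Λ (R F)) atTop (𝓝 0) := by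
    refine Metric.tendsto_nhds.2 fun ε hε ↦ ?_
    obtain ⟨δ, hδ, hδΛ⟩ := hΛ (ε / 2) (half_pos hε)
    filter_upwards [hμR.eventually (gt_mem_nhds hδ)] with F hF
    rw [Real.dist_eq, sub_zero]
    exact (hδΛ _ (hR F) hF).trans_lt (half_lt_self hε)
  have h := (tendsto_const_nhds (x := Λ (⋃ n, s n))).sub hΛR
  rw [sub_zero] at h
  exact h.congr fun F ↦ by rw [hsplit F, add_sub_cancel_right]

lemma eventually_isFiniteMeasure_of_continuousAt {X : Type*} [TopologicalSpace X]
    {P : X → Measure Ω} {x : X}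
    (hP : ContinuousAt (fun t ↦ (P t univ).toReal) x) (hx : 0 < (P x univ).toReal) :
    ∀ᶠ t in 𝓝 x, IsFiniteMeasure (P t) :=
  (hP.eventually (lt_mem_nhds hx)).mono fun _ ht ↦ ⟨(ENNReal.toReal_pos_iff.1 ht).2⟩

section Derivative

variable {Ξ : Type*} [NormedAddCommGroup Ξ] [NormedSpace ℝ Ξ] {P : Ξ → Measure Ω} {θ : Ξ}

lemma eq_add_of_hasFDerivAt_measureReal_union (hfin : ∀ᶠ t in 𝓝 θ, IsFiniteMeasure (P t))
    {A B : Set Ω} (hAB : Disjoint A B) (hB : MeasurableSet B) {fA fB fAB : Ξ →L[ℝ] ℝ}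
    (hA' : HasFDerivAt (fun t ↦ (P t A).toReal) fA θ)
    (hB' : HasFDerivAt (fun t ↦ (P t B).toReal) fB θ)
    (hAB' : HasFDerivAt (fun t ↦ (P t (A ∪ B)).toReal) fAB θ) :
    fAB = fA + fB :=
  hAB'.unique <| (hA'.add hB').congr_of_eventuallyEq <|
    hfin.mono fun _ _ ↦ measureReal_union hAB hB

lemma eq_zero_of_hasFDerivAt_measureReal {B : Set Ω} {f' : Ξ →L[ℝ] ℝ}
    (h : HasFDerivAt (fun t ↦ (P t B).toReal) f' θ) (h0 : P θ B = 0) : f' = 0 :=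
  IsLocalMin.hasFDerivAt_eq_zero (.of_forall fun _ ↦ by simp [h0]) h

theorem exists_isFiniteMeasure_abs_le_of_hasFDerivAt (hfin : ∀ᶠ t in 𝓝 θ, IsFiniteMeasure (P t))
    {D : Set Ω → Ξ →L[ℝ] ℝ}
    (hD : ∀ B, MeasurableSet B → HasFDerivAt (fun t ↦ (P t B).toReal) (D B) θ) (φ : Ξ) :
    ∃ μ : Measure Ω, IsFiniteMeasure μ ∧
      ∀ ε > 0, ∃ δ > 0, ∀ B, MeasurableSet B → μ.real B < δ → |D B φ| ≤ ε := by
  have : IsFiniteMeasure (P θ) := hfin.self_of_nhds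
  have ht : Tendsto (fun n : ℕ ↦ θ + ((n : ℝ) + 1)⁻¹ • φ) atTop (𝓝 θ) := by
    simpa using ((tendsto_one_div_add_atTop_nhds_zero_nat (𝕜 := ℝ)).smul_const φ).const_add θ
  obtain ⟨N, hN⟩ := eventually_atTop.1 (ht.eventually hfin)
  set c : ℕ → ℝ := fun k ↦ ((k + N : ℕ) : ℝ) + 1
  set t : ℕ → Ξ := fun k ↦ θ + (c k)⁻¹ • φ
  have (k : ℕ) : IsFiniteMeasure (P (t k)) := hN (k + N) le_add_self
  obtain ⟨μ, hμ, hdom⟩ := exists_isFiniteMeasure_forall_le_smul fun k ↦ P (t k)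
  have hθdom : P θ ≤ (1 : ℝ≥0) • (P θ + μ) := by simpa using Measure.le_add_right le_rfl
  have htdom (k : ℕ) : ∃ C : ℝ≥0, P (t k) ≤ C • (P θ + μ) := by
    obtain ⟨C, hC⟩ := hdom k
    exact ⟨C, hC.trans (by gcongr; exact Measure.le_add_left le_rfl)⟩
  have hc : Tendsto (fun k ↦ ‖c k‖) atTop atTop := tendsto_norm_atTop_atTop.comp <|
    tendsto_atTop_add_const_right _ 1 (tendsto_natCast_atTop_atTop.comp (tendsto_add_atTop_nat N))
  refine ⟨P θ + μ, inferInstance, fun ε hε ↦ exists_abs_le_of_measureReal_lt_of_tendsto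
    (fun k s ↦ c k * ((P (t k)).real s - (P θ).real s)) (fun k s s' _ hs' hss' ↦ ?_)
    (fun k ↦ ?_) (fun B hB ↦ (hD B hB).lim φ hc) hε⟩
  · rw [measureReal_union hss' hs', measureReal_union hss' hs']
    ring
  · obtain ⟨C, hC⟩ := htdom k
    exact continuous_const.mul ((MeasuredSets.continuous_measureReal_of_le_smul hC).sub
      (MeasuredSets.continuous_measureReal_of_le_smul hθdom))

end Derivative
end MeasureTheory

theorem statement0_general
    {Ω : Type*} [MeasurableSpace Ω]
    {Ξ : Type*} [NormedAddCommGroup Ξ] [InnerProductSpace ℝ Ξ]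
    (Θ : Set Ξ) (P : Ξ → Measure Ω)
    (hProb : ∀ θ ∈ Θ, IsProbabilityMeasure (P θ))
    (D : Ξ → Set Ω → (Ξ →L[ℝ] ℝ))
    (hD : ∀ B : Set Ω, MeasurableSet B → ∀ θ ∈ Θ,
      HasFDerivAt (fun t => (P t B).toReal) (D θ B) θ)
    (θ : Ξ) (hθ : θ ∈ Θ) (φ : Ξ) :
    (∀ s : ℕ → Set Ω, (∀ n, MeasurableSet (s n)) → Pairwise (Function.onFun Disjoint s) →
        HasSum (fun n => D θ (s n) φ) (D θ (⋃ n, s n) φ)) ∧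
    (∀ B : Set Ω, MeasurableSet B → P θ B = 0 → D θ B φ = 0) := by
  have := hProb θ hθ
  have hDθ (B : Set Ω) (hB : MeasurableSet B) := hD B hB θ hθ
  have hfin := eventually_isFiniteMeasure_of_continuousAt (hDθ univ .univ).continuousAt (by simp)
  obtain ⟨μ, _, hμ⟩ := exists_isFiniteMeasure_abs_le_of_hasFDerivAt hfin hDθ φ
  refine ⟨fun s hs hdisj ↦ hasSum_of_additive_of_abs_le (fun A B hA hB hAB ↦ ?_) hμ hs hdisj,
    fun B hB h0 ↦ ?_⟩
  · rw [eq_add_of_hasFDerivAt_measureReal_union hfin hAB hB (hDθ A hA) (hDθ B hB)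
      (hDθ _ (hA.union hB))]
    rfl
  · rw [eq_zero_of_hasFDerivAt_measureReal (hDθ B hB) h0]
    rfl

/-- If for all measurable sets `B` the map `θ ↦ P θ B` is Fréchet
differentiable on `Θ ⊆ Ξ` (Ξ a separable real Hilbert space), with derivative the bounded
linear functional `D θ B : Ξ →L[ℝ] ℝ`, then for every fixed `φ ∈ Ξ` the set function
`B ↦ D θ B φ` is countably additive and absolutely continuous with respect to `P θ`. -/
theorem statement0
    {Ω : Type*} [MeasurableSpace Ω]
    {Ξ : Type*} [NormedAddCommGroup Ξ] [InnerProductSpace ℝ Ξ] [CompleteSpace Ξ]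
    [SecondCountableTopology Ξ]
    (Θ : Set Ξ) (P : Ξ → Measure Ω)
    (hProb : ∀ θ ∈ Θ, IsProbabilityMeasure (P θ))
    (D : Ξ → Set Ω → (Ξ →L[ℝ] ℝ))
    (hD : ∀ B : Set Ω, MeasurableSet B → ∀ θ ∈ Θ,
      HasFDerivAt (fun t => (P t B).toReal) (D θ B) θ)
    (θ : Ξ) (hθ : θ ∈ Θ) (φ : Ξ) :
    (∀ s : ℕ → Set Ω, (∀ n, MeasurableSet (s n)) → Pairwise (Function.onFun Disjoint s) →
        HasSum (fun n => D θ (s n) φ) (D θ (⋃ n, s n) φ)) ∧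
    (∀ B : Set Ω, MeasurableSet B → P θ B = 0 → D θ B φ = 0) :=
  statement0_general Θ P hProb D hD θ hθ φ
end

section
/- The kernel of the Fisher information operator is contained in the kernel of the derivative of any expectation: if f̂: Ω → ℝ^k is measurable with mean f̄(θ) = E_θ[f̂], then ker J_θ ⊆ ker D_θ f̄. -/
open MeasureTheory

local notation "⟪" x ", " y "⟫" => @inner ℝ _ _ x y

/-! A direction `φ` in the kernel of the Fisher information has score `⟪κ, φ⟫` of zero second
moment, so the score vanishes almost surely; by the exchange condition `D φ` is the expectation
of that score times `f`, hence zero. -/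

theorem ae_eq_zero_of_integral_mul_self_eq_zero {α : Type*} [MeasurableSpace α] {μ : Measure α}
    {g : α → ℝ} (hg : MemLp g 2 μ) (h : ∫ x, g x * g x ∂μ = 0) : g =ᵐ[μ] 0 := by
  have hint : Integrable (fun x => g x * g x) μ := by simpa only [sq] using hg.integrable_sq
  filter_upwards [(integral_eq_zero_iff_of_nonneg (fun x => mul_self_nonneg (g x)) hint).1 h]
    with x hx
  exact mul_self_eq_zero.1 hx

theorem ae_inner_eq_zero_of_apply_eq_zero
    {α : Type*} [MeasurableSpace α] {μ : Measure α}
    {Ξ : Type*} [NormedAddCommGroup Ξ] [InnerProductSpace ℝ Ξ]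
    {κ : α → Ξ} (hκ : MemLp κ 2 μ) {J : Ξ →L[ℝ] Ξ}
    (hJ : ∀ φ χ : Ξ, ⟪φ, J χ⟫ = ∫ x, ⟪κ x, φ⟫ * ⟪κ x, χ⟫ ∂μ)
    {φ : Ξ} (hφ : J φ = 0) : (fun x => ⟪κ x, φ⟫) =ᵐ[μ] 0 :=
  ae_eq_zero_of_integral_mul_self_eq_zero (hκ.inner_const φ)
    (by rw [← hJ, hφ, inner_zero_right])

theorem statement7_general
    {Ω : Type*} [MeasurableSpace Ω]
    {Ξ : Type*} [NormedAddCommGroup Ξ] [InnerProductSpace ℝ Ξ] {k : ℕ}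
    (P : Ξ → Measure Ω)
    (θ : Ξ)
    (f : Ω → EuclideanSpace ℝ (Fin k))
    (κ : Ω → Ξ) (hκmeas : AEStronglyMeasurable κ (P θ))
    (hκL2 : Integrable (fun x => ‖κ x‖ ^ 2) (P θ))
    (J : Ξ →L[ℝ] Ξ)
    (hJ : ∀ φ χ : Ξ, ⟪φ, J χ⟫ = ∫ x, ⟪κ x, φ⟫ * ⟪κ x, χ⟫ ∂(P θ))
    (D : Ξ →L[ℝ] EuclideanSpace ℝ (Fin k))
    (hexch : ∀ φ : Ξ, D φ = ∫ x, ⟪κ x, φ⟫ • f x ∂(P θ)) :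
    LinearMap.ker (J : Ξ →ₗ[ℝ] Ξ) ≤ LinearMap.ker (D : Ξ →ₗ[ℝ] EuclideanSpace ℝ (Fin k)) := by
  intro φ (hφ : J φ = 0)
  have hscore : (fun x => ⟪κ x, φ⟫) =ᵐ[P θ] 0 :=
    ae_inner_eq_zero_of_apply_eq_zero ((memLp_two_iff_integrable_sq_norm hκmeas).2 hκL2) hJ hφ
  have hintegrand : (fun x => ⟪κ x, φ⟫ • f x) =ᵐ[P θ] 0 :=
    hscore.mono fun x (hx : ⟪κ x, φ⟫ = 0) => by simp only [hx, zero_smul, Pi.zero_apply]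
  change D φ = 0
  rw [hexch φ, integral_congr_ae hintegrand, Pi.zero_def, integral_zero]

/-- The kernel of the Fisher information operator is contained in the
kernel of the derivative of any expectation: if `f̂ : Ω → ℝᵏ` is measurable with mean
`f̄(θ) = E_θ[f̂]` (Fréchet derivative `D`, satisfying the exchange condition
`D φ = ∫ ⟪κ x, φ⟫ • f̂ x dP θ`), then `ker J_θ ⊆ ker D_θ f̄`. -/
theorem statement7
    {Ω : Type*} [MeasurableSpace Ω]
    {Ξ : Type*} [NormedAddCommGroup Ξ] [InnerProductSpace ℝ Ξ] [CompleteSpace Ξ]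
    [SecondCountableTopology Ξ] {k : ℕ}
    (P : Ξ → Measure Ω) (hProb : ∀ t : Ξ, IsProbabilityMeasure (P t))
    (θ : Ξ)
    (f : Ω → EuclideanSpace ℝ (Fin k)) (hf : Measurable f)
    (hfL2 : Integrable (fun x => ‖f x‖ ^ 2) (P θ))
    (κ : Ω → Ξ) (hκmeas : AEStronglyMeasurable κ (P θ))
    (hκL2 : Integrable (fun x => ‖κ x‖ ^ 2) (P θ))
    (J : Ξ →L[ℝ] Ξ)
    (hJ : ∀ φ χ : Ξ, ⟪φ, J χ⟫ = ∫ x, ⟪κ x, φ⟫ * ⟪κ x, χ⟫ ∂(P θ))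
    (D : Ξ →L[ℝ] EuclideanSpace ℝ (Fin k))
    (hD : HasFDerivAt (fun t => ∫ x, f x ∂(P t)) D θ)
    (hexch : ∀ φ : Ξ, D φ = ∫ x, ⟪κ x, φ⟫ • f x ∂(P θ)) :
    LinearMap.ker (J : Ξ →ₗ[ℝ] Ξ) ≤ LinearMap.ker (D : Ξ →ₗ[ℝ] EuclideanSpace ℝ (Fin k)) :=
  statement7_general P θ f κ hκmeas hκL2 J hJ D hexch
end

section
/- If a locally unbiased estimator of a differentiable function f: Θ → ℝ exists at θ, then ∇_θ f ∈ (ker J_θ)^⊥. -/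
/-!
Since `J` is the second-moment operator of the score `κ`, a vector `χ ∈ ker J` satisfies
`E[⟪κ, χ⟫²] = ⟪χ, J χ⟫ = 0`, so `⟪κ, χ⟫ = 0` almost surely. Hence `D_θ E[f̂] χ = E[f̂ ⟪κ, χ⟫] = 0`,
i.e. `ker J ⊆ ker D_θ E[f̂] = ker D_θ f`, and the Riesz representative of a functional is
orthogonal to every subspace contained in its kernel.
-/

open MeasureTheory

local notation "⟪" x ", " y "⟫" => @inner ℝ _ _ x y

theorem InnerProductSpace.toDual_symm_mem_orthogonal_of_le_ker {𝕜 E : Type*} [RCLike 𝕜]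
    [NormedAddCommGroup E] [InnerProductSpace 𝕜 E] [CompleteSpace E] {K : Submodule 𝕜 E}
    {ℓ : StrongDual 𝕜 E} (h : K ≤ LinearMap.ker (ℓ : E →ₗ[𝕜] 𝕜)) :
    (toDual 𝕜 E).symm ℓ ∈ Kᗮ := by
  rw [Submodule.mem_orthogonal']
  intro u hu
  rw [toDual_symm_apply]
  exact h hu

section SecondMoment

variable {Ω Ξ : Type*} [MeasurableSpace Ω] [NormedAddCommGroup Ξ] [InnerProductSpace ℝ Ξ]
  {μ : Measure Ω} {κ : Ω → Ξ} {J : Ξ →L[ℝ] Ξ}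

theorem inner_ae_eq_zero_of_apply_eq_zero (hκ : MemLp κ 2 μ)
    (hJ : ∀ φ χ : Ξ, ⟪φ, J χ⟫ = ∫ x, ⟪κ x, φ⟫ * ⟪κ x, χ⟫ ∂μ) {χ : Ξ} (hχ : J χ = 0) :
    (fun x => ⟪κ x, χ⟫) =ᵐ[μ] 0 := by
  have hsq : ∫ x, ⟪κ x, χ⟫ ^ 2 ∂μ = 0 := by simpa [sq, hχ] using (hJ χ χ).symm
  have hsq_ae := (integral_eq_zero_iff_of_nonneg (fun x => sq_nonneg _)
    (hκ.inner_const χ).integrable_sq).1 hsq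
  filter_upwards [hsq_ae] with x hx
  exact pow_eq_zero_iff two_ne_zero |>.1 hx

theorem ker_le_ker_of_eq_integral_mul_inner (hκ : MemLp κ 2 μ)
    (hJ : ∀ φ χ : Ξ, ⟪φ, J χ⟫ = ∫ x, ⟪κ x, φ⟫ * ⟪κ x, χ⟫ ∂μ)
    {g : Ω → ℝ} {L : Ξ →L[ℝ] ℝ} (hL : ∀ φ : Ξ, L φ = ∫ x, g x * ⟪κ x, φ⟫ ∂μ) :
    LinearMap.ker (J : Ξ →ₗ[ℝ] Ξ) ≤ LinearMap.ker (L : Ξ →ₗ[ℝ] ℝ) := by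
  intro χ hχ
  have hκχ := inner_ae_eq_zero_of_apply_eq_zero hκ hJ hχ
  change L χ = 0
  rw [hL, integral_eq_zero_of_ae]
  filter_upwards [hκχ] with x hx
  simp [hx]

end SecondMoment

theorem statement8_general
    {Ω : Type*} [MeasurableSpace Ω]
    {Ξ : Type*} [NormedAddCommGroup Ξ] [InnerProductSpace ℝ Ξ] [CompleteSpace Ξ]
    (P : Ξ → Measure Ω)
    (θ : Ξ)
    (Df : Ξ →L[ℝ] ℝ)
    (fhat : Ω → ℝ)
    (κ : Ω → Ξ) (hκmeas : AEStronglyMeasurable κ (P θ))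
    (hκL2 : Integrable (fun x => ‖κ x‖ ^ 2) (P θ))
    (J : Ξ →L[ℝ] Ξ)
    (hJ : ∀ φ χ : Ξ, ⟪φ, J χ⟫ = ∫ x, ⟪κ x, φ⟫ * ⟪κ x, χ⟫ ∂(P θ))
    (Dmean : Ξ →L[ℝ] ℝ)
    (hexch : ∀ φ : Ξ, Dmean φ = ∫ x, fhat x * ⟪κ x, φ⟫ ∂(P θ))
    -- local unbiasedness at θ:
    (hlocal : Dmean = Df) :
    (InnerProductSpace.toDual ℝ Ξ).symm Df ∈ (LinearMap.ker (J : Ξ →ₗ[ℝ] Ξ))ᗮ := by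
  have hκ : MemLp κ 2 (P θ) := (memLp_two_iff_integrable_sq_norm hκmeas).2 hκL2
  subst hlocal
  exact InnerProductSpace.toDual_symm_mem_orthogonal_of_le_ker
    (ker_le_ker_of_eq_integral_mul_inner hκ hJ hexch)

/-- If a locally unbiased estimator `f̂` of a differentiable function
`f : Θ → ℝ` exists at `θ` (i.e. `E_θ[f̂] = f(θ)` and `D_θ E_θ[f̂] = D_θ f`), then the Riesz
gradient `∇_θ f` belongs to `(ker J_θ)ᗮ`. -/
theorem statement8
    {Ω : Type*} [MeasurableSpace Ω]
    {Ξ : Type*} [NormedAddCommGroup Ξ] [InnerProductSpace ℝ Ξ] [CompleteSpace Ξ]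
    [SecondCountableTopology Ξ]
    (P : Ξ → Measure Ω) (hProb : ∀ t : Ξ, IsProbabilityMeasure (P t))
    (θ : Ξ)
    (f : Ξ → ℝ) (Df : Ξ →L[ℝ] ℝ) (hf : HasFDerivAt f Df θ)
    (fhat : Ω → ℝ) (hfhat : Measurable fhat)
    (hfL2 : Integrable (fun x => (fhat x) ^ 2) (P θ))
    (κ : Ω → Ξ) (hκmeas : AEStronglyMeasurable κ (P θ))
    (hκL2 : Integrable (fun x => ‖κ x‖ ^ 2) (P θ))
    (J : Ξ →L[ℝ] Ξ)
    (hJ : ∀ φ χ : Ξ, ⟪φ, J χ⟫ = ∫ x, ⟪κ x, φ⟫ * ⟪κ x, χ⟫ ∂(P θ))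
    (Dmean : Ξ →L[ℝ] ℝ)
    (hDmean : HasFDerivAt (fun t => ∫ x, fhat x ∂(P t)) Dmean θ)
    (hexch : ∀ φ : Ξ, Dmean φ = ∫ x, fhat x * ⟪κ x, φ⟫ ∂(P θ))
    -- local unbiasedness at θ:
    (hunbiased : ∫ x, fhat x ∂(P θ) = f θ)
    (hlocal : Dmean = Df) :
    (InnerProductSpace.toDual ℝ Ξ).symm Df ∈ (LinearMap.ker (J : Ξ →ₗ[ℝ] Ξ))ᗮ :=
  statement8_general P θ Df fhat κ hκmeas hκL2 J hJ Dmean hexch hlocal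
end

section
/- Moore-Penrose inverse comparison: if J^M and J^S are positive bounded operators with J^M ≤ J^S, then for every φ in (ker J^M)^⊥, one has (φ, (J^M)⁺ φ) ≥ (φ, (J^S)⁺ φ), assuming both Moore-Penrose inverses exist. -/
/-!
If `A X A = A` and `A X` is self-adjoint, then `A X` is the orthogonal projection onto the
closure of the range of `A`, i.e. onto `(ker A†)ᗮ`; so `JM (JM⁺ φ) = φ`, and also
`JS (JS⁺ φ) = φ` because `0 ≤ JM ≤ JS` forces `ker JS ⊆ ker JM`. With `ψ = JM⁺ φ` and
`χ = JS⁺ φ`, expanding `0 ≤ ⟪JM (χ - ψ), χ - ψ⟫` and bounding `⟪JM χ, χ⟫ ≤ ⟪JS χ, χ⟫ = ⟪φ, χ⟫`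
leaves `⟪φ, χ⟫ ≤ ⟪φ, ψ⟫`.
-/

local notation "⟪" x ", " y "⟫" => @inner ℝ _ _ x y

open scoped InnerProduct

namespace ContinuousLinearMap

section MoorePenrose

variable {𝕜 E F : Type*} [RCLike 𝕜] [NormedAddCommGroup E] [InnerProductSpace 𝕜 E]
  [CompleteSpace E] [NormedAddCommGroup F] [InnerProductSpace 𝕜 F] [CompleteSpace F]

theorem apply_apply_eq_self_of_mem_orthogonal_ker_adjoint {A : E →L[𝕜] F} {X : F →L[𝕜] E}
    (h1 : A ∘L X ∘L A = A) (h3 : IsSelfAdjoint (A ∘L X)) {y : F}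
    (hy : y ∈ (A†).kerᗮ) : A (X y) = y := by
  have hadj : A† ∘L (A ∘L X) = A† := by
    have h := congrArg adjoint h1
    rwa [← comp_assoc, adjoint_comp, h3.adjoint_eq] at h
  have hker : y - A (X y) ∈ (A†).ker := by
    simpa [sub_eq_zero] using (DFunLike.congr_fun hadj y).symm
  have hrange : A (X y) ∈ (A†).kerᗮ := by
    rw [← orthogonal_range]
    exact Submodule.le_orthogonal_orthogonal _ ⟨X y, rfl⟩
  have hperp : y - A (X y) ∈ (A†).kerᗮ := Submodule.sub_mem _ hy hrange
  have := (Submodule.mem_bot 𝕜).1 ((Submodule.inf_orthogonal_eq_bot _).le ⟨hker, hperp⟩)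
  exact (sub_eq_zero.1 this).symm

end MoorePenrose

variable {E : Type*} [NormedAddCommGroup E] [InnerProductSpace ℝ E]

theorem IsPositive.apply_eq_zero_of_inner_apply_self_eq_zero {T : E →L[ℝ] E}
    (hT : T.IsPositive) {x : E} (hx : ⟪T x, x⟫ = 0) : T x = 0 := by
  let B := (innerₗ E).compl₂ (T : E →ₗ[ℝ] E)
  have hCS :=
    LinearMap.BilinForm.apply_mul_apply_le_of_forall_zero_le B hT.inner_nonneg_right (T x) x
  have hsymm : ⟪x, T (T x)⟫ = ⟪T x, T x⟫ := (hT.inner_left_eq_inner_right x (T x)).symm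
  rw [real_inner_comm] at hx
  simp only [B, LinearMap.compl₂_apply, innerₗ_apply_apply, coe_coe, hsymm, hx,
    mul_zero] at hCS
  exact inner_self_eq_zero.1 (mul_self_eq_zero.1 (le_antisymm hCS (mul_self_nonneg _)))

theorem IsPositive.ker_le_ker_of_le {A B : E →L[ℝ] E} (hA : A.IsPositive) (hAB : A ≤ B) :
    B.ker ≤ A.ker := by
  intro x hx
  have hBx : B x = 0 := hx
  have hle : ⟪A x, x⟫ ≤ 0 := by
    simpa [inner_sub_left, hBx] using hAB.inner_nonneg_left x
  exact hA.apply_eq_zero_of_inner_apply_self_eq_zero (le_antisymm hle (hA.inner_nonneg_left x))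

theorem IsPositive.inner_le_inner_of_le_of_apply_eq {A B : E →L[ℝ] E} (hA : A.IsPositive)
    (hAB : A ≤ B) {φ ψ χ : E} (hψ : A ψ = φ) (hχ : B χ = φ) : ⟪φ, χ⟫ ≤ ⟪φ, ψ⟫ := by
  have hAχ : ⟪A χ, χ⟫ ≤ ⟪φ, χ⟫ := by
    simpa [inner_sub_left, hχ] using hAB.inner_nonneg_left χ
  have hcross : ⟪A χ, ψ⟫ = ⟪φ, χ⟫ := by
    rw [hA.inner_left_eq_inner_right, hψ, real_inner_comm]
  have expand : ⟪A (χ - ψ), χ - ψ⟫ = ⟪A χ, χ⟫ - 2 * ⟪φ, χ⟫ + ⟪φ, ψ⟫ := by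
    rw [map_sub, inner_sub_left, inner_sub_right, inner_sub_right, hψ, hcross,
      real_inner_comm χ φ]
    ring
  linarith [hA.inner_nonneg_left (χ - ψ)]

end ContinuousLinearMap

theorem statement15_general
    {Ξ : Type*} [NormedAddCommGroup Ξ] [InnerProductSpace ℝ Ξ] [CompleteSpace Ξ]
    (JM JS JMp JSp : Ξ →L[ℝ] Ξ)
    (hMsa : IsSelfAdjoint JM) (hSsa : IsSelfAdjoint JS)
    (hMpos : ∀ φ : Ξ, 0 ≤ ⟪φ, JM φ⟫)
    (hle : ∀ φ : Ξ, ⟪φ, JM φ⟫ ≤ ⟪φ, JS φ⟫)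
    -- JMp is the Moore–Penrose inverse of JM:
    (hM1 : JM ∘L JMp ∘L JM = JM)
    (hM3 : IsSelfAdjoint (JM ∘L JMp))
    -- JSp is the Moore–Penrose inverse of JS:
    (hS1 : JS ∘L JSp ∘L JS = JS)
    (hS3 : IsSelfAdjoint (JS ∘L JSp)) :
    ∀ φ ∈ (LinearMap.ker (JM : Ξ →ₗ[ℝ] Ξ))ᗮ, ⟪φ, JSp φ⟫ ≤ ⟪φ, JMp φ⟫ := by
  intro φ hφ
  have hJM : JM.IsPositive :=
    (JM.isPositive_iff').2 ⟨hMsa, fun x => real_inner_comm x (JM x) ▸ hMpos x⟩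
  have hJMJS : JM ≤ JS := (JS - JM).isPositive_iff'.2 ⟨hSsa.sub hMsa, fun x => by
    rw [sub_apply, inner_sub_left, sub_nonneg, real_inner_comm x, real_inner_comm x]
    exact hle x⟩
  have hφS : φ ∈ JS.kerᗮ := Submodule.orthogonal_le (hJM.ker_le_ker_of_le hJMJS) hφ
  refine hJM.inner_le_inner_of_le_of_apply_eq hJMJS ?_ ?_
  · exact ContinuousLinearMap.apply_apply_eq_self_of_mem_orthogonal_ker_adjoint hM1 hM3
      (by rwa [hMsa.adjoint_eq])
  · exact ContinuousLinearMap.apply_apply_eq_self_of_mem_orthogonal_ker_adjoint hS1 hS3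
      (by rwa [hSsa.adjoint_eq])

/-- **Moore–Penrose inverse comparison.** If `JM` and `JS` are positive
self-adjoint bounded operators on a real Hilbert space `Ξ` with `JM ≤ JS`, and both
Moore–Penrose inverses `JMp`, `JSp` exist, then for every `φ ∈ (ker JM)ᗮ` one has
`(φ, JM⁺ φ) ≥ (φ, JS⁺ φ)`. -/
theorem statement15
    {Ξ : Type*} [NormedAddCommGroup Ξ] [InnerProductSpace ℝ Ξ] [CompleteSpace Ξ]
    (JM JS JMp JSp : Ξ →L[ℝ] Ξ)
    (hMsa : IsSelfAdjoint JM) (hSsa : IsSelfAdjoint JS)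
    (hMpos : ∀ φ : Ξ, 0 ≤ ⟪φ, JM φ⟫) (hSpos : ∀ φ : Ξ, 0 ≤ ⟪φ, JS φ⟫)
    (hle : ∀ φ : Ξ, ⟪φ, JM φ⟫ ≤ ⟪φ, JS φ⟫)
    -- JMp is the Moore–Penrose inverse of JM:
    (hM1 : JM ∘L JMp ∘L JM = JM) (hM2 : JMp ∘L JM ∘L JMp = JMp)
    (hM3 : IsSelfAdjoint (JM ∘L JMp)) (hM4 : IsSelfAdjoint (JMp ∘L JM))
    -- JSp is the Moore–Penrose inverse of JS:
    (hS1 : JS ∘L JSp ∘L JS = JS) (hS2 : JSp ∘L JS ∘L JSp = JSp)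
    (hS3 : IsSelfAdjoint (JS ∘L JSp)) (hS4 : IsSelfAdjoint (JSp ∘L JS)) :
    ∀ φ ∈ (LinearMap.ker (JM : Ξ →ₗ[ℝ] Ξ))ᗮ, ⟪φ, JSp φ⟫ ≤ ⟪φ, JMp φ⟫ :=
  statement15_general JM JS JMp JSp hMsa hSsa hMpos hle hM1 hM3 hS1 hS3
end

section
/- Operator Schur complement theorem: for a self-adjoint operator M = [[A, B],[B*, C]] on ℋ ⊕ 𝒦, the condition M ≥ 0 is equivalent to: A ≥ 0, ran B ⊆ ran A, and C − B*A⁺B ≥ 0; and also equivalent to: C ≥ 0, (ker B)^⊥ ⊆ (ker C)^⊥, and A − B C⁺ B* ≥ 0. -/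
open ContinuousLinearMap

local notation "⟪" x ", " y "⟫" => @inner ℂ _ _ x y

/-!
If `A w = B y`, completing the square gives
`⟪(x, y), M (x, y)⟫ = ⟪x + w, A (x + w)⟫ + ⟪y, (C - B† A⁺ B) y⟫`, which proves both directions of
the first equivalence once `ran B ⊆ ran A` is known. That inclusion is forced by `M ≥ 0`: for a
self-adjoint `A` with `A A⁺ A = A` and `A⁺ A` self-adjoint, `ran A = (ker A)ᗮ`, and testing `M` on
`(s ⟪v, B y⟫ v, y)` with `v ∈ ker A` and `s → -∞` shows `B y ⊥ ker A`.

The second equivalence is the first one for the swapped block operator `[[C, B†], [B, A]]`, where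
`ran B† ⊆ ran C = (ker C)ᗮ` is equivalent to `(ker B)ᗮ ⊆ (ker C)ᗮ` because `(ker B)ᗮ` is the
closure of `ran B†`.
-/

open scoped ComplexOrder

section RangeKer

variable {𝕜 E F : Type*} [RCLike 𝕜] [NormedAddCommGroup E] [InnerProductSpace 𝕜 E] [CompleteSpace E]
  [NormedAddCommGroup F] [InnerProductSpace 𝕜 F] [CompleteSpace F]

theorem IsSelfAdjoint.inner_left_eq_inner_right {T : E →L[𝕜] E} (hT : IsSelfAdjoint T) (x y : E) :
    inner 𝕜 (T x) y = inner 𝕜 x (T y) :=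
  hT.isSymmetric x y

theorem IsSelfAdjoint.range_eq_orthogonal_ker {T Tp : E →L[𝕜] E} (hT : IsSelfAdjoint T)
    (hinv : T ∘L Tp ∘L T = T) (hproj : IsSelfAdjoint (Tp ∘L T)) :
    LinearMap.range (T : E →ₗ[𝕜] E) = (LinearMap.ker (T : E →ₗ[𝕜] E))ᗮ := by
  refine le_antisymm ?_ fun u hu => ?_
  · rw [orthogonal_ker, hT.adjoint_eq]
    exact Submodule.le_topologicalClosure _
  set q := u - Tp (T u)
  have hq : T q = 0 := by
    rw [map_sub, sub_eq_zero]
    exact (congr($hinv u)).symm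
  have hq_proj : inner 𝕜 q (Tp (T u)) = 0 := by
    rw [← comp_apply Tp T, ← hproj.inner_left_eq_inner_right, comp_apply, hq, map_zero,
      inner_zero_left]
  have hq_self : inner 𝕜 q q = 0 := by
    rw [inner_sub_right, (Submodule.mem_orthogonal _ _).1 hu _ hq, hq_proj, sub_zero]
  have hu_eq : u = Tp (T u) := sub_eq_zero.mp (inner_self_eq_zero.mp hq_self)
  have hP : Tp ∘L T = T ∘L adjoint Tp := by
    rw [← hproj.adjoint_eq, adjoint_comp, hT.adjoint_eq]
  exact ⟨adjoint Tp u, (congr($hP u)).symm.trans hu_eq.symm⟩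

theorem IsSelfAdjoint.range_adjoint_le_range_iff {T Tp : E →L[𝕜] E} (hT : IsSelfAdjoint T)
    (hinv : T ∘L Tp ∘L T = T) (hproj : IsSelfAdjoint (Tp ∘L T)) (B : E →L[𝕜] F) :
    LinearMap.range (adjoint B : F →ₗ[𝕜] E) ≤ LinearMap.range (T : E →ₗ[𝕜] E) ↔
      (LinearMap.ker (B : E →ₗ[𝕜] F))ᗮ ≤ (LinearMap.ker (T : E →ₗ[𝕜] E))ᗮ := by
  rw [hT.range_eq_orthogonal_ker hinv hproj, orthogonal_ker B]
  exact ⟨fun h => Submodule.topologicalClosure_minimal _ h (Submodule.isClosed_orthogonal _),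
    (Submodule.le_topologicalClosure _).trans⟩

end RangeKer

theorem ContinuousLinearMap.isPositive_iff_forall_inner_nonneg {E : Type*} [NormedAddCommGroup E]
    [InnerProductSpace ℂ E] (T : E →L[ℂ] E) : T.IsPositive ↔ ∀ x, 0 ≤ ⟪x, T x⟫ := by
  rw [isPositive_iff_complex]
  refine forall_congr' fun x => ?_
  rw [← inner_conj_symm x (T x), ← Complex.star_def, star_nonneg_iff,
    RCLike.nonneg_iff_exists_ofReal (K := ℂ)]
  exact ⟨fun h => ⟨_, h.2, h.1⟩, by rintro ⟨r, hr, hrz⟩; rw [← hrz]; simpa using hr⟩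

section Block

variable {H K : Type*} [NormedAddCommGroup H] [InnerProductSpace ℂ H] [CompleteSpace H]
  [NormedAddCommGroup K] [InnerProductSpace ℂ K] [CompleteSpace K]

/-- The quadratic form of the block operator `[[A, B], [B†, C]]` on `H × K`. -/
noncomputable def blockForm (A : H →L[ℂ] H) (B : K →L[ℂ] H) (C : K →L[ℂ] K) (x : H) (y : K) : ℂ :=
  ⟪x, A x⟫ + ⟪x, B y⟫ + ⟪y, adjoint B x⟫ + ⟪y, C y⟫

variable {A Ap : H →L[ℂ] H} {B : K →L[ℂ] H} {C : K →L[ℂ] K}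

theorem blockForm_swap (x : H) (y : K) : blockForm C (adjoint B) A y x = blockForm A B C x y := by
  rw [blockForm, blockForm, adjoint_adjoint]
  ring

/-- Completing the square. -/
theorem blockForm_eq_add_inner_schur (hA : IsSelfAdjoint A) (hinv : A ∘L Ap ∘L A = A)
    {w : H} {y : K} (hw : A w = B y) (x : H) :
    blockForm A B C x y = ⟪x + w, A (x + w)⟫ + ⟪y, (C - adjoint B ∘L Ap ∘L B) y⟫ := by
  have hBAp : ⟪y, (adjoint B ∘L Ap ∘L B) y⟫ = ⟪w, A w⟫ := by
    rw [comp_apply, adjoint_inner_right, comp_apply, ← hw, hA.inner_left_eq_inner_right,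
      show A (Ap (A w)) = A w from congr($hinv w)]
  have hBx : ⟪y, adjoint B x⟫ = ⟪w, A x⟫ := by
    rw [adjoint_inner_right, ← hw, hA.inner_left_eq_inner_right]
  rw [blockForm, sub_apply, inner_sub_right, hBAp, hBx, ← hw, map_add, inner_add_left,
    inner_add_right, inner_add_right]
  ring

theorem inner_apply_eq_zero_of_blockForm_nonneg (h : ∀ x y, 0 ≤ blockForm A B C x y)
    {v : H} (hv : A v = 0) (y : K) : ⟪v, B y⟫ = 0 := by
  -- nonnegativity for every real `s` forces the slope `2 ‖⟪v, B y⟫‖ ^ 2` to vanish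
  have hform (s : ℝ) : blockForm A B C ((s * ⟪v, B y⟫) • v) y =
      ((2 * s * ‖⟪v, B y⟫‖ ^ 2 : ℝ) : ℂ) + ⟪y, C y⟫ := by
    simp only [blockForm, map_smul, hv, smul_zero, inner_zero_right, zero_add, inner_smul_left,
      inner_smul_right, adjoint_inner_right, map_mul, Complex.conj_ofReal]
    rw [← inner_conj_symm (B y) v]
    generalize ⟪v, B y⟫ = c
    push_cast
    linear_combination (2 * (s : ℂ)) * RCLike.mul_conj c
  have hre (s : ℝ) : 0 ≤ 2 * s * ‖⟪v, B y⟫‖ ^ 2 + (⟪y, C y⟫).re := by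
    simpa only [hform, Complex.add_re, Complex.ofReal_re] using
      (Complex.nonneg_iff.1 (h ((s * ⟪v, B y⟫) • v) y)).1
  by_contra hc
  have hpos : 0 < ‖⟪v, B y⟫‖ ^ 2 := by positivity
  have := hre (-((⟪y, C y⟫).re + 1) / (2 * ‖⟪v, B y⟫‖ ^ 2))
  field_simp at this
  linarith

theorem forall_blockForm_nonneg_iff_schur_left (hinv : A ∘L Ap ∘L A = A)
    (hproj : IsSelfAdjoint (Ap ∘L A)) :
    (∀ x y, 0 ≤ blockForm A B C x y) ↔
      A.IsPositive ∧ LinearMap.range (B : K →ₗ[ℂ] H) ≤ LinearMap.range (A : H →ₗ[ℂ] H) ∧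
        (C - adjoint B ∘L Ap ∘L B).IsPositive := by
  constructor
  · intro h
    have hA : A.IsPositive := (isPositive_iff_forall_inner_nonneg A).2 fun x => by
      simpa [blockForm] using h x 0
    have hBA : LinearMap.range (B : K →ₗ[ℂ] H) ≤ LinearMap.range (A : H →ₗ[ℂ] H) := by
      rintro _ ⟨y, rfl⟩
      rw [hA.isSelfAdjoint.range_eq_orthogonal_ker hinv hproj]
      exact (Submodule.mem_orthogonal _ _).2 fun v hv =>
        inner_apply_eq_zero_of_blockForm_nonneg h hv y
    refine ⟨hA, hBA, (isPositive_iff_forall_inner_nonneg _).2 fun y => ?_⟩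
    obtain ⟨w, hw⟩ := hBA ⟨y, rfl⟩
    simpa [blockForm_eq_add_inner_schur hA.isSelfAdjoint hinv hw] using h (-w) y
  · rintro ⟨hA, hBA, hS⟩ x y
    obtain ⟨w, hw⟩ := hBA ⟨y, rfl⟩
    rw [blockForm_eq_add_inner_schur hA.isSelfAdjoint hinv hw]
    exact add_nonneg (hA.inner_nonneg_right _) (hS.inner_nonneg_right _)

theorem forall_blockForm_nonneg_iff_schur_right {Cp : K →L[ℂ] K} (hinv : C ∘L Cp ∘L C = C)
    (hproj : IsSelfAdjoint (Cp ∘L C)) :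
    (∀ x y, 0 ≤ blockForm A B C x y) ↔
      C.IsPositive ∧ (LinearMap.ker (B : K →ₗ[ℂ] H))ᗮ ≤ (LinearMap.ker (C : K →ₗ[ℂ] K))ᗮ ∧
        (A - B ∘L Cp ∘L adjoint B).IsPositive := by
  calc (∀ x y, 0 ≤ blockForm A B C x y) ↔ ∀ y x, 0 ≤ blockForm C (adjoint B) A y x := by
        simp only [blockForm_swap]
        exact forall_comm
    _ ↔ _ := by
        rw [forall_blockForm_nonneg_iff_schur_left hinv hproj, adjoint_adjoint]
    _ ↔ _ := and_congr_right fun hC =>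
        and_congr_left' (hC.isSelfAdjoint.range_adjoint_le_range_iff hinv hproj B)

end Block

theorem statement16_general
    {H K : Type*} [NormedAddCommGroup H] [InnerProductSpace ℂ H] [CompleteSpace H]
    [NormedAddCommGroup K] [InnerProductSpace ℂ K] [CompleteSpace K]
    (A : H →L[ℂ] H) (B : K →L[ℂ] H) (C : K →L[ℂ] K)
    (Ap : H →L[ℂ] H) (Cp : K →L[ℂ] K)
    -- Ap is the Moore–Penrose inverse of A:
    (hA1 : A ∘L Ap ∘L A = A) (hA4 : IsSelfAdjoint (Ap ∘L A))
    -- Cp is the Moore–Penrose inverse of C: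
    (hC1 : C ∘L Cp ∘L C = C) (hC4 : IsSelfAdjoint (Cp ∘L C)) :
    ((∀ (x : H) (y : K),
        0 ≤ (⟪x, A x⟫ + ⟪x, B y⟫ + ⟪y, (adjoint B) x⟫ + ⟪y, C y⟫).re ∧
        (⟪x, A x⟫ + ⟪x, B y⟫ + ⟪y, (adjoint B) x⟫ + ⟪y, C y⟫).im = 0) ↔
      (A.IsPositive ∧ LinearMap.range (B : K →ₗ[ℂ] H) ≤ LinearMap.range (A : H →ₗ[ℂ] H) ∧
        (C - (adjoint B) ∘L Ap ∘L B).IsPositive)) ∧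
    ((∀ (x : H) (y : K),
        0 ≤ (⟪x, A x⟫ + ⟪x, B y⟫ + ⟪y, (adjoint B) x⟫ + ⟪y, C y⟫).re ∧
        (⟪x, A x⟫ + ⟪x, B y⟫ + ⟪y, (adjoint B) x⟫ + ⟪y, C y⟫).im = 0) ↔
      (C.IsPositive ∧ (LinearMap.ker (B : K →ₗ[ℂ] H))ᗮ ≤ (LinearMap.ker (C : K →ₗ[ℂ] K))ᗮ ∧
        (A - B ∘L Cp ∘L (adjoint B)).IsPositive)) := by
  simp only [← RCLike.re_to_complex, ← RCLike.im_to_complex, ← RCLike.nonneg_iff]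
  exact ⟨forall_blockForm_nonneg_iff_schur_left hA1 hA4,
    forall_blockForm_nonneg_iff_schur_right hC1 hC4⟩

/-- **operator Schur complement theorem.** For the self-adjoint block
operator `M = [[A, B],[B*, C]]` on `ℋ ⊕ 𝒦` (`A`, `C` self-adjoint, with Moore–Penrose
inverses `Ap`, `Cp`), positivity of `M`—expressed by
`0 ≤ re(⟪x, Ax⟫ + ⟪x, By⟫ + ⟪y, B*x⟫ + ⟪y, Cy⟫)` for all `x ∈ ℋ`, `y ∈ 𝒦`—is equivalent
to `A ≥ 0 ∧ ran B ⊆ ran A ∧ C − B*A⁺B ≥ 0`, and also equivalent to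
`C ≥ 0 ∧ (ker B)ᗮ ⊆ (ker C)ᗮ ∧ A − B C⁺ B* ≥ 0`. -/
theorem statement16
    {H K : Type*} [NormedAddCommGroup H] [InnerProductSpace ℂ H] [CompleteSpace H]
    [NormedAddCommGroup K] [InnerProductSpace ℂ K] [CompleteSpace K]
    (A : H →L[ℂ] H) (B : K →L[ℂ] H) (C : K →L[ℂ] K)
    (hA : IsSelfAdjoint A) (hC : IsSelfAdjoint C)
    (Ap : H →L[ℂ] H) (Cp : K →L[ℂ] K)
    -- Ap is the Moore–Penrose inverse of A:
    (hA1 : A ∘L Ap ∘L A = A) (hA2 : Ap ∘L A ∘L Ap = Ap)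
    (hA3 : IsSelfAdjoint (A ∘L Ap)) (hA4 : IsSelfAdjoint (Ap ∘L A))
    -- Cp is the Moore–Penrose inverse of C:
    (hC1 : C ∘L Cp ∘L C = C) (hC2 : Cp ∘L C ∘L Cp = Cp)
    (hC3 : IsSelfAdjoint (C ∘L Cp)) (hC4 : IsSelfAdjoint (Cp ∘L C)) :
    ((∀ (x : H) (y : K),
        0 ≤ (⟪x, A x⟫ + ⟪x, B y⟫ + ⟪y, (adjoint B) x⟫ + ⟪y, C y⟫).re ∧
        (⟪x, A x⟫ + ⟪x, B y⟫ + ⟪y, (adjoint B) x⟫ + ⟪y, C y⟫).im = 0) ↔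
      (A.IsPositive ∧ LinearMap.range (B : K →ₗ[ℂ] H) ≤ LinearMap.range (A : H →ₗ[ℂ] H) ∧
        (C - (adjoint B) ∘L Ap ∘L B).IsPositive)) ∧
    ((∀ (x : H) (y : K),
        0 ≤ (⟪x, A x⟫ + ⟪x, B y⟫ + ⟪y, (adjoint B) x⟫ + ⟪y, C y⟫).re ∧
        (⟪x, A x⟫ + ⟪x, B y⟫ + ⟪y, (adjoint B) x⟫ + ⟪y, C y⟫).im = 0) ↔
      (C.IsPositive ∧ (LinearMap.ker (B : K →ₗ[ℂ] H))ᗮ ≤ (LinearMap.ker (C : K →ₗ[ℂ] K))ᗮ ∧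
        (A - B ∘L Cp ∘L (adjoint B)).IsPositive)) :=
  statement16_general A B C Ap Cp hA1 hA4 hC1 hC4
end
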